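/- Let γ be a confidence parameter with 0 < γ < 1 and let X₀ → Y₀, X₁ → Y₁, …, X_k → Y_k be partial implications over [n] with k ≥ 1. Then the following are equivalent: (1) X₁ → Y₁, …, X_k → Y_k ⊨_γ X₀ → Y₀; (2) there exists L ⊆ [k] such that {X_i → Y_i : i ∈ L} ⊨_γ X₀ → Y₀ holds properly; (3) either Y₀ ⊆ X₀, or there exists a non-empty L ⊆ [k] such that (a) {X_i → Y_i : i ∈ L} enforces homogeneity, (b) ⋃_{i∈L} X_i ⊆ X₀ ⊆ ⋃_{i∈L} X_iY_i, (c) Y₀ ⊆ X₀ ∪ ⋂_{i∈L} Y_i, and (d) γ ≥ γ*({X_i → Y_i : i ∈ L}, X₀). -/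

import Mathlib

open Finset

/-- Number of transactions in the dataset `D` that cover `X`, counted with multiplicity. -/
def cntD {n : ℕ} (D : Multiset (Finset (Fin n))) (X : Finset (Fin n)) : ℕ :=
  (D.filter (fun Z => X ⊆ Z)).card

/-- `D ⊨_γ X → Y` : either no transaction covers `X`, or the confidence of `X → Y` is ≥ γ. -/
def satPI {n : ℕ} (γ : ℝ) (D : Multiset (Finset (Fin n))) (X Y : Finset (Fin n)) : Prop :=
  cntD D X = 0 ∨ γ * (cntD D X : ℝ) ≤ (cntD D (X ∪ Y) : ℝ)

/-- Entailment at confidence threshold γ from the premises indexed by `L`. -/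
def entailsFrom {n k : ℕ} (γ : ℝ) (P : Fin k → Finset (Fin n) × Finset (Fin n))
    (L : Finset (Fin k)) (X₀ Y₀ : Finset (Fin n)) : Prop :=
  ∀ D : Multiset (Finset (Fin n)),
    (∀ i ∈ L, satPI γ D (P i).1 (P i).2) → satPI γ D X₀ Y₀

/-- Proper entailment from the premises indexed by `L`: the entailment holds,
and it fails from every proper subset of the premises. -/
def properFrom {n k : ℕ} (γ : ℝ) (P : Fin k → Finset (Fin n) × Finset (Fin n))
    (L : Finset (Fin k)) (X₀ Y₀ : Finset (Fin n)) : Prop :=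
  entailsFrom γ P L X₀ Y₀ ∧ ∀ L' ⊂ L, ¬ entailsFrom γ P L' X₀ Y₀

/-- The weight `w_Z(X → Y)`: `1-γ` if `Z` witnesses, `-γ` if `Z` violates, `0` otherwise. -/
noncomputable def wt {n : ℕ} (γ : ℝ) (Z X Y : Finset (Fin n)) : ℝ :=
  if X ∪ Y ⊆ Z then 1 - γ else if X ⊆ Z then -γ else 0

/-- The premises indexed by `L` enforce homogeneity. -/
def homogFrom {n k : ℕ} (P : Fin k → Finset (Fin n) × Finset (Fin n))
    (L : Finset (Fin k)) : Prop :=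
  ∀ Z : Finset (Fin n),
    (∀ i ∈ L, ¬ (P i).1 ⊆ Z ∨ (P i).1 ∪ (P i).2 ⊆ Z) →
    ((∀ i ∈ L, ¬ (P i).1 ⊆ Z) ∨ (∀ i ∈ L, (P i).1 ∪ (P i).2 ⊆ Z))

/-- The critical threshold `γ*({Xᵢ → Yᵢ : i ∈ L}, X)`. -/
noncomputable def gammaStar {n k : ℕ} (P : Fin k → Finset (Fin n) × Finset (Fin n))
    (L : Finset (Fin k)) (X : Finset (Fin n)) : ℝ :=
  sInf { r : ℝ | ∃ lam : Fin k → ℝ, (∀ i ∈ L, 0 ≤ lam i) ∧ (∑ i ∈ L, lam i) = 1 ∧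
    r = (Finset.univ.filter (fun Z : Finset (Fin n) => ¬ X ⊆ Z)).fold max 0
          (fun Z => (∑ i ∈ L.filter (fun i => (P i).1 ∪ (P i).2 ⊆ Z), lam i) /
                    (∑ i ∈ L.filter (fun i => (P i).1 ⊆ Z), lam i)) }


/-!
A dataset satisfies `X → Y` at confidence `γ` iff the weights `wt γ Z X Y` of its transactions
have a nonnegative sum, so entailment is a question about a linear program. By Farkas' lemma it
holds iff some nonnegative combination `μ` of the premise weights is dominated, transaction by
transaction, by the weight of `X₀ → Y₀`; otherwise the dual solution is a nonnegative weighting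
of the transactions which, once made strict and rounded to integers, is a counterexample dataset.

For such a certificate `μ` of minimal support `L`, evaluating at the transactions `[n]`, `X₀`,
`X₀ ∪ Yᵢ` and `⋃ XᵢYᵢ` gives `∑ μ = 1` and conditions (b) and (c), and evaluating at the
transactions not containing `X₀` gives `γ* ≤ γ`. A transaction breaking homogeneity would let
`μ` be restricted to the premises it witnesses, contradicting minimality. Conversely, under
(b)–(d) a near-optimal `λ` for `γ*` is a certificate up to an arbitrarily small slack, and this
already forces the entailment.
-/

section Farkas

variable {ι η : Type*} [Fintype η]

lemma exists_nonneg_combination_insert_of_proj [DecidableEq ι] {a : ι} {s : Finset ι} (ha : a ∉ s)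
    {v : ι → η → ℝ} {b y : η → ℝ} (hy : ∀ i ∈ s, 0 ≤ v i ⬝ᵥ y) (hby : b ⬝ᵥ y < 0)
    (hya : v a ⬝ᵥ y < 0) {c : ι → ℝ} (hc : ∀ i ∈ s, 0 ≤ c i)
    (hcb : ∑ i ∈ s, c i • (v i - (v i ⬝ᵥ y / v a ⬝ᵥ y) • v a) =
      b - (b ⬝ᵥ y / v a ⬝ᵥ y) • v a) :
    ∃ c' : ι → ℝ, (∀ i ∈ insert a s, 0 ≤ c' i) ∧ ∑ i ∈ insert a s, c' i • v i = b := by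
  set α := (b ⬝ᵥ y - ∑ i ∈ s, c i * v i ⬝ᵥ y) / v a ⬝ᵥ y
  have hα : 0 ≤ α := div_nonneg_of_nonpos
    (by linarith [sum_nonneg fun i hi => mul_nonneg (hc i hi) (hy i hi)]) hya.le
  refine ⟨Function.update c a α, ?_, ?_⟩
  · intro i hi
    rcases mem_insert.mp hi with rfl | hi
    · simpa using hα
    · rw [Function.update_of_ne (ne_of_mem_of_not_mem hi ha)]; exact hc i hi
  · have hsum : ∑ i ∈ s, Function.update c a α i • v i = ∑ i ∈ s, c i • v i :=
      sum_congr rfl fun i hi => by rw [Function.update_of_ne (ne_of_mem_of_not_mem hi ha)]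
    rw [sum_insert ha, Function.update_self, hsum]
    simp only [smul_sub, smul_smul, sum_sub_distrib, ← sum_smul] at hcb
    rw [sub_eq_iff_eq_add.mp hcb]
    simp only [α, sub_div, sum_div, sub_smul, mul_div_assoc]
    abel

theorem exists_nonneg_combination_or_separating [DecidableEq ι] (s : Finset ι)
    (v : ι → η → ℝ) (b : η → ℝ) :
    (∃ c : ι → ℝ, (∀ i ∈ s, 0 ≤ c i) ∧ ∑ i ∈ s, c i • v i = b) ∨
      ∃ y : η → ℝ, (∀ i ∈ s, 0 ≤ v i ⬝ᵥ y) ∧ b ⬝ᵥ y < 0 := by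
  induction s using Finset.induction_on generalizing v b with
  | empty =>
    by_cases hb : b = 0
    · exact Or.inl ⟨0, by simp, by simp [hb]⟩
    · refine Or.inr ⟨-b, by simp, ?_⟩
      rw [dotProduct_neg, neg_lt_zero]
      exact (dotProduct_self_star_nonneg b).lt_of_ne' (mt dotProduct_self_eq_zero.mp hb)
  | insert a s ha ih =>
    rcases ih v b with ⟨c, hc, hcb⟩ | ⟨y, hy, hby⟩
    · refine Or.inl ⟨Function.update c a 0, ?_, ?_⟩
      · intro i hi
        rcases mem_insert.mp hi with rfl | hi
        · simp
        · rw [Function.update_of_ne (ne_of_mem_of_not_mem hi ha)]; exact hc i hi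
      · rw [sum_insert ha, Function.update_self, zero_smul, zero_add, ← hcb]
        exact sum_congr rfl fun i hi => by
          rw [Function.update_of_ne (ne_of_mem_of_not_mem hi ha)]
    by_cases hya : 0 ≤ v a ⬝ᵥ y
    · exact Or.inr ⟨y, forall_mem_insert _ _ _ |>.mpr ⟨hya, hy⟩, hby⟩
    push Not at hya
    -- Project everything along `v a` onto the hyperplane `y⊥` and recurse.
    set d := v a ⬝ᵥ y
    let π : (η → ℝ) → η → ℝ := fun u => u - (u ⬝ᵥ y / d) • v a
    rcases ih (fun i => π (v i)) (π b) with ⟨c, hc, hcb⟩ | ⟨y', hy', hby'⟩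
    · exact Or.inl (exists_nonneg_combination_insert_of_proj ha hy hby hya hc hcb)
    · have hπ : ∀ u, u ⬝ᵥ (y' - (v a ⬝ᵥ y' / d) • y) = π u ⬝ᵥ y' := fun u => by
        simp only [π, dotProduct_sub, sub_dotProduct, dotProduct_smul, smul_dotProduct,
          smul_eq_mul]
        ring
      refine Or.inr ⟨y' - (v a ⬝ᵥ y' / d) • y, ?_, by rw [hπ]; exact hby'⟩
      refine forall_mem_insert _ _ _ |>.mpr ⟨?_, fun i hi => by rw [hπ]; exact hy' i hi⟩
      have hd : v a ⬝ᵥ y / d = 1 := div_self hya.ne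
      simp [hπ, π, hd]

theorem exists_nonneg_sum_smul_le_or_exists_nonneg_dual [Fintype ι] (A : ι → η → ℝ)
    (b : η → ℝ) :
    (∃ μ : ι → ℝ, 0 ≤ μ ∧ ∑ i, μ i • A i ≤ b) ∨
      ∃ m : η → ℝ, 0 ≤ m ∧ (∀ i, 0 ≤ A i ⬝ᵥ m) ∧ b ⬝ᵥ m < 0 := by
  classical
  rcases exists_nonneg_combination_or_separating univ
    (Sum.elim A fun x => Pi.single x 1) b with ⟨c, hc, hcb⟩ | ⟨m, hm, hbm⟩
  · refine Or.inl ⟨c ∘ Sum.inl, fun i => hc _ (mem_univ _), ?_⟩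
    rw [← hcb, Fintype.sum_sum_type]
    refine le_add_of_nonneg_right ?_
    simp only [Sum.elim_inr, ← Pi.single_smul, smul_eq_mul, mul_one, univ_sum_single]
    exact fun x => hc _ (mem_univ _)
  · refine Or.inr ⟨m, fun x => ?_, fun i => hm (.inl i) (mem_univ _), hbm⟩
    simpa using hm (.inr x) (mem_univ _)

end Farkas

section Weights

variable {n : ℕ} {γ : ℝ} {X Y Z Z' : Finset (Fin n)}

lemma wt_eq :
    wt γ Z X Y = (if X ∪ Y ⊆ Z then 1 else 0) - γ * if X ⊆ Z then 1 else 0 := by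
  unfold wt
  by_cases h : X ∪ Y ⊆ Z
  · simp [h, subset_union_left.trans h]
  · by_cases h' : X ⊆ Z <;> simp [h, h']

lemma wt_of_union_subset (h : X ∪ Y ⊆ Z) : wt γ Z X Y = 1 - γ := if_pos h

lemma wt_of_subset_of_not_union_subset (h : X ⊆ Z) (h' : ¬ X ∪ Y ⊆ Z) : wt γ Z X Y = -γ := by
  rw [wt, if_neg h', if_pos h]

lemma wt_of_not_subset (h : ¬ X ⊆ Z) : wt γ Z X Y = 0 := by
  rw [wt, if_neg fun h' => h (subset_union_left.trans h'), if_neg h]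

lemma wt_le (hγ : γ ≤ 1) : wt γ Z X Y ≤ 1 - γ := by
  unfold wt; split_ifs <;> linarith

lemma neg_le_wt (hγ : 0 ≤ γ) : -γ ≤ wt γ Z X Y := by
  unfold wt; split_ifs <;> linarith

lemma wt_eq_neg_iff (hγ : γ ≠ 0) : wt γ Z X Y = -γ ↔ X ⊆ Z ∧ ¬ X ∪ Y ⊆ Z := by
  unfold wt; split_ifs with h h' <;> simp_all

lemma wt_pos_iff (hγ0 : 0 ≤ γ) (hγ1 : γ < 1) : 0 < wt γ Z X Y ↔ X ∪ Y ⊆ Z := by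
  unfold wt; split_ifs with h <;> simp only [h, iff_true, iff_false, not_lt] <;> linarith

lemma wt_inter_of_union_subset (h : X ∪ Y ⊆ Z) : wt γ (Z' ∩ Z) X Y = wt γ Z' X Y := by
  simp only [wt, subset_inter_iff, h, (subset_union_left.trans h : X ⊆ Z), and_true]

lemma wt_inter_of_not_subset (h : ¬ X ⊆ Z) : wt γ (Z' ∩ Z) X Y = 0 :=
  wt_of_not_subset fun h' => h (h'.trans inter_subset_right)

end Weights

section Datasets

variable {n : ℕ}

lemma sum_map_wt (γ : ℝ) (D : Multiset (Finset (Fin n))) (X Y : Finset (Fin n)) :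
    (D.map fun Z => wt γ Z X Y).sum = cntD D (X ∪ Y) - γ * cntD D X := by
  induction D using Multiset.induction_on with
  | empty => simp [cntD]
  | cons Z D ih =>
    rw [Multiset.map_cons, Multiset.sum_cons, ih, wt_eq]
    simp only [cntD, Multiset.filter_cons]
    split_ifs <;> simp <;> ring

lemma satPI_iff_sum_map_wt_nonneg {γ : ℝ} {D : Multiset (Finset (Fin n))}
    {X Y : Finset (Fin n)} : satPI γ D X Y ↔ 0 ≤ (D.map fun Z => wt γ Z X Y).sum := by
  have hmono : cntD D (X ∪ Y) ≤ cntD D X :=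
    Multiset.card_le_card <| Multiset.monotone_filter_right D fun Z h => subset_union_left.trans h
  rw [sum_map_wt, sub_nonneg, satPI]
  refine ⟨?_, Or.inr⟩
  rintro (h | h)
  · simp [h, Nat.le_zero.mp (h ▸ hmono)]
  · exact h

lemma Multiset.sum_map_sum_replicate {α R : Type*} [Fintype α] [CommSemiring R] (c : α → ℕ)
    (f : α → R) : ((∑ a, Multiset.replicate (c a) a).map f).sum = ∑ a, c a * f a := by
  rw [← Multiset.coe_mapAddMonoidHom, map_sum, ← Multiset.coe_sumAddMonoidHom, map_sum]
  simp

end Datasets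

section Entailment

open Filter Topology

variable {n k : ℕ} {γ : ℝ} {P : Fin k → Finset (Fin n) × Finset (Fin n)} {L : Finset (Fin k)}
  {X₀ Y₀ : Finset (Fin n)}

noncomputable def wtComb (γ : ℝ) (P : Fin k → Finset (Fin n) × Finset (Fin n)) (L : Finset (Fin k))
    (μ : Fin k → ℝ) (Z : Finset (Fin n)) : ℝ :=
  ∑ i ∈ L, μ i * wt γ Z (P i).1 (P i).2

lemma wtComb_eq (μ : Fin k → ℝ) (Z : Finset (Fin n)) :
    wtComb γ P L μ Z =
      ∑ i ∈ L with (P i).1 ∪ (P i).2 ⊆ Z, μ i - γ * ∑ i ∈ L with (P i).1 ⊆ Z, μ i := by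
  simp only [wtComb, wt_eq, mul_sub, mul_ite, mul_one, mul_zero, sum_sub_distrib, mul_sum,
    sum_filter]
  congr 1
  exact sum_congr rfl fun i _ => by split_ifs <;> ring

lemma entailsFrom_mono {L' : Finset (Fin k)} (hL : L ⊆ L') (h : entailsFrom γ P L X₀ Y₀) :
    entailsFrom γ P L' X₀ Y₀ :=
  fun D hD => h D fun i hi => hD i (hL hi)

lemma entailsFrom_of_subset (hγ : γ ≤ 1) (h : Y₀ ⊆ X₀) : entailsFrom γ P L X₀ Y₀ := by
  intro D _
  rw [satPI, union_eq_left.mpr h]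
  exact Or.inr (mul_le_of_le_one_left (Nat.cast_nonneg _) hγ)

lemma exists_properFrom_of_entailsFrom (h : entailsFrom γ P L X₀ Y₀) :
    ∃ L', properFrom γ P L' X₀ Y₀ := by
  obtain ⟨L', hL'⟩ := exists_minimal_of_wellFoundedLT (entailsFrom γ P · X₀ Y₀) ⟨L, h⟩
  exact ⟨L', hL'.prop, fun L'' hlt h'' => hL'.not_lt h'' hlt⟩

lemma le_sum_map_wt_add_mul_card {μ : Fin k → ℝ} {ε : ℝ} (hμ : ∀ i ∈ L, 0 ≤ μ i)
    (hle : ∀ Z, wtComb γ P L μ Z ≤ wt γ Z X₀ Y₀ + ε) {D : Multiset (Finset (Fin n))}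
    (hD : ∀ i ∈ L, satPI γ D (P i).1 (P i).2) :
    0 ≤ (D.map fun Z => wt γ Z X₀ Y₀).sum + ε * Multiset.card D :=
  calc 0 ≤ ∑ i ∈ L, μ i * (D.map fun Z => wt γ Z (P i).1 (P i).2).sum :=
        sum_nonneg fun i hi => mul_nonneg (hμ i hi) (satPI_iff_sum_map_wt_nonneg.mp (hD i hi))
    _ = (D.map fun Z => wtComb γ P L μ Z).sum := by
        simp only [wtComb, Multiset.sum_map_sum, Multiset.sum_map_mul_left]
    _ ≤ (D.map fun Z => wt γ Z X₀ Y₀ + ε).sum :=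
        Multiset.sum_map_le_sum_map _ _ fun Z _ => hle Z
    _ = _ := by
        rw [Multiset.sum_map_add, Multiset.map_const', Multiset.sum_replicate, nsmul_eq_mul,
          mul_comm]

lemma entailsFrom_of_forall_pos (h : ∀ ε > 0, ∃ μ : Fin k → ℝ, (∀ i ∈ L, 0 ≤ μ i) ∧
    ∀ Z, wtComb γ P L μ Z ≤ wt γ Z X₀ Y₀ + ε) : entailsFrom γ P L X₀ Y₀ := by
  intro D hD
  rw [satPI_iff_sum_map_wt_nonneg]
  refine le_of_forall_pos_le_add fun ε hε => ?_
  set N : ℝ := (Multiset.card D : ℝ)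
  obtain ⟨μ, hμ, hle⟩ := h (ε / (N + 1)) (by positivity)
  have hεN : ε / (N + 1) * N ≤ ε := by
    rw [div_mul_eq_mul_div, div_le_iff₀ (by positivity)]
    nlinarith
  linarith [le_sum_map_wt_add_mul_card hμ hle hD]

lemma not_entailsFrom_of_nat_weights (c : Finset (Fin n) → ℕ)
    (hprem : ∀ i ∈ L, 0 ≤ (fun Z => wt γ Z (P i).1 (P i).2) ⬝ᵥ fun Z => (c Z : ℝ))
    (hconc : (fun Z => wt γ Z X₀ Y₀) ⬝ᵥ (fun Z => (c Z : ℝ)) < 0) :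
    ¬ entailsFrom γ P L X₀ Y₀ := by
  have hsum : ∀ X Y, ((∑ Z, Multiset.replicate (c Z) Z).map fun Z => wt γ Z X Y).sum =
      (fun Z => wt γ Z X Y) ⬝ᵥ fun Z => (c Z : ℝ) := fun X Y => by
    simp only [Multiset.sum_map_sum_replicate, dotProduct, mul_comm]
  intro h
  have := h _ fun i hi => satPI_iff_sum_map_wt_nonneg.mpr ((hsum _ _).symm ▸ hprem i hi)
  rw [satPI_iff_sum_map_wt_nonneg, hsum] at this
  exact this.not_gt hconc

lemma exists_nat_forall_dotProduct_pos {ι J : Type*} [Fintype ι] [Finite J] (a : J → ι → ℝ)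
    {m : ι → ℝ} (hm : 0 ≤ m) (h : ∀ j, 0 < a j ⬝ᵥ m) :
    ∃ c : ι → ℕ, ∀ j, 0 < a j ⬝ᵥ fun x => (c x : ℝ) := by
  have hlim : ∀ j, Tendsto (fun t : ℝ => a j ⬝ᵥ fun x => (⌈m x * t⌉₊ : ℝ) / t) atTop
      (𝓝 (a j ⬝ᵥ m)) := fun j =>
    tendsto_finsetSum _ fun x _ => (tendsto_nat_ceil_mul_div_atTop (hm x)).const_mul _
  obtain ⟨t, ht, htj⟩ := ((eventually_gt_atTop 0).and
    (eventually_all.mpr fun j => (hlim j).eventually (lt_mem_nhds (h j)))).exists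
  refine ⟨fun x => ⌈m x * t⌉₊, fun j => ?_⟩
  calc 0 < t * a j ⬝ᵥ fun x => (⌈m x * t⌉₊ : ℝ) / t := mul_pos ht (htj j)
    _ = _ := by simp only [dotProduct, mul_sum, mul_div_cancel₀ _ ht.ne', mul_left_comm t]

lemma exists_nonneg_wtComb_le_of_entailsFrom (hγ1 : γ < 1)
    (h : entailsFrom γ P univ X₀ Y₀) :
    ∃ μ : Fin k → ℝ, 0 ≤ μ ∧ ∀ Z, wtComb γ P univ μ Z ≤ wt γ Z X₀ Y₀ := by
  set A : Fin k → Finset (Fin n) → ℝ := fun i Z => wt γ Z (P i).1 (P i).2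
  set b : Finset (Fin n) → ℝ := fun Z => wt γ Z X₀ Y₀
  rcases exists_nonneg_sum_smul_le_or_exists_nonneg_dual A b with
    ⟨μ, hμ, hle⟩ | ⟨m, hm, hAm, hbm⟩
  · exact ⟨μ, hμ, fun Z => by simpa [wtComb, A, b, mul_comm] using hle Z⟩
  exfalso
  -- All weights are `1 - γ > 0` at the full transaction, so moving a little mass there makes
  -- the premises strict while keeping the conclusion violated.
  set δ := -(b ⬝ᵥ m) / (2 * (1 - γ))
  have hδ : 0 < δ := div_pos (by linarith) (by linarith)
  set m' := m + δ • Pi.single univ 1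
  have hm' : 0 ≤ m' := add_nonneg hm (smul_nonneg hδ.le (Pi.single_nonneg.mpr zero_le_one))
  have hshift : ∀ f : Finset (Fin n) → ℝ, f ⬝ᵥ m' = f ⬝ᵥ m + δ * f univ := fun f => by
    simp [m', dotProduct_add, dotProduct_smul, dotProduct_single, mul_comm]
  have hδγ : δ * (1 - γ) = -(b ⬝ᵥ m) / 2 := by
    have : (1 : ℝ) - γ ≠ 0 := by linarith
    simp only [δ]; field_simp
  have hAu : ∀ i, A i univ = 1 - γ := fun i => wt_of_union_subset (subset_univ _)
  have hbu : b univ = 1 - γ := wt_of_union_subset (subset_univ _)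
  obtain ⟨c, hc⟩ := exists_nat_forall_dotProduct_pos (fun j => Option.elim j (-b) A) hm' (by
    rintro (_ | i)
    · simp only [Option.elim, neg_dotProduct, hshift, Pi.neg_apply, hbu]
      linarith
    · simp only [Option.elim, hshift, hAu]
      linarith [hAm i])
  exact not_entailsFrom_of_nat_weights c (fun i _ => (hc (some i)).le)
    (by simpa [neg_dotProduct] using hc none) h

end Entailment

section CriticalThreshold

variable {n k : ℕ} {γ : ℝ} {P : Fin k → Finset (Fin n) × Finset (Fin n)} {L : Finset (Fin k)}
  {X₀ Y₀ : Finset (Fin n)}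

-- Lean's `x / 0 = 0` gives the paper's convention `0/0 = 0`.
noncomputable def confRatio (P : Fin k → Finset (Fin n) × Finset (Fin n)) (L : Finset (Fin k))
    (lam : Fin k → ℝ) (Z : Finset (Fin n)) : ℝ :=
  (∑ i ∈ L with (P i).1 ∪ (P i).2 ⊆ Z, lam i) / ∑ i ∈ L with (P i).1 ⊆ Z, lam i

lemma gammaStar_le_of_forall_confRatio_le {t : ℝ} (ht : 0 ≤ t) {lam : Fin k → ℝ}
    (h0 : ∀ i ∈ L, 0 ≤ lam i) (h1 : ∑ i ∈ L, lam i = 1)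
    (h : ∀ Z, ¬ X₀ ⊆ Z → confRatio P L lam Z ≤ t) : gammaStar P L X₀ ≤ t := by
  unfold gammaStar
  refine le_trans (csInf_le (a := (univ.filter fun Z => ¬ X₀ ⊆ Z).fold max 0 (confRatio P L lam))
    ⟨0, ?_⟩ ⟨lam, h0, h1, rfl⟩) ((fold_max_le _).mpr ⟨ht, fun Z hZ => h Z (mem_filter.mp hZ).2⟩)
  rintro _ ⟨lam', -, -, rfl⟩
  exact (le_fold_max _).mpr (Or.inl le_rfl)

lemma exists_forall_confRatio_lt_of_gammaStar_lt {t : ℝ} (hL : L.Nonempty)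
    (h : gammaStar P L X₀ < t) : ∃ lam : Fin k → ℝ, (∀ i ∈ L, 0 ≤ lam i) ∧
      ∑ i ∈ L, lam i = 1 ∧ ∀ Z, ¬ X₀ ⊆ Z → confRatio P L lam Z < t := by
  have hL' : (#L : ℝ) ≠ 0 := Nat.cast_ne_zero.mpr hL.card_pos.ne'
  unfold gammaStar at h
  obtain ⟨_, ⟨lam, h0, h1, rfl⟩, hlt⟩ := exists_lt_of_csInf_lt
    (by exact ⟨_, fun _ => (#L : ℝ)⁻¹, fun _ _ => by positivity, by simp [hL'], rfl⟩) h
  exact ⟨lam, h0, h1, fun Z hZ =>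
    ((le_fold_max _).mpr (Or.inr ⟨Z, mem_filter.mpr ⟨mem_univ _, hZ⟩, le_rfl⟩)).trans_lt hlt⟩

lemma wtComb_le_of_confRatio_le {lam : Fin k → ℝ} (h0 : ∀ i ∈ L, 0 ≤ lam i)
    (h1 : ∑ i ∈ L, lam i = 1) (hγ : γ ≤ 1) {ε : ℝ} (hε : 0 ≤ ε)
    (hX : ∀ i ∈ L, (P i).1 ⊆ X₀) (hY : Y₀ ⊆ X₀ ∪ L.inf fun i => (P i).2)
    (hr : ∀ Z, ¬ X₀ ⊆ Z → confRatio P L lam Z ≤ γ + ε) (Z : Finset (Fin n)) :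
    wtComb γ P L lam Z ≤ wt γ Z X₀ Y₀ + ε := by
  by_cases hZY : X₀ ∪ Y₀ ⊆ Z
  · calc wtComb γ P L lam Z ≤ ∑ i ∈ L, lam i * (1 - γ) :=
          sum_le_sum fun i hi => mul_le_mul_of_nonneg_left (wt_le hγ) (h0 i hi)
      _ ≤ wt γ Z X₀ Y₀ + ε := by rw [← sum_mul, h1, one_mul, wt_of_union_subset hZY]; linarith
  by_cases hZ : X₀ ⊆ Z
  · -- A premise witnessed by `Z` would give `Y₀ ⊆ X₀ ∪ Yᵢ ⊆ Z`.
    have hviol : ∀ i ∈ L, wt γ Z (P i).1 (P i).2 = -γ := fun i hi =>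
      wt_of_subset_of_not_union_subset ((hX i hi).trans hZ) fun hi' => hZY <| union_subset hZ <|
        hY.trans <| union_subset hZ <| (inf_le hi).trans (subset_union_right.trans hi')
    rw [wtComb, sum_congr rfl fun i hi => by rw [hviol i hi], ← sum_mul, h1,
      wt_of_subset_of_not_union_subset hZ hZY]
    linarith
  · have hnum0 : 0 ≤ ∑ i ∈ L with (P i).1 ∪ (P i).2 ⊆ Z, lam i :=
      sum_nonneg fun i hi => h0 i (mem_filter.mp hi).1
    have hnum : ∑ i ∈ L with (P i).1 ∪ (P i).2 ⊆ Z, lam i ≤ ∑ i ∈ L with (P i).1 ⊆ Z, lam i :=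
      sum_le_sum_of_subset_of_nonneg
        (monotone_filter_right L fun i _ h => subset_union_left.trans h)
        fun i hi _ => h0 i (mem_filter.mp hi).1
    have hden : ∑ i ∈ L with (P i).1 ⊆ Z, lam i ≤ 1 :=
      h1 ▸ sum_le_sum_of_subset_of_nonneg (filter_subset _ _) fun i hi _ => h0 i hi
    have hnum_le : ∑ i ∈ L with (P i).1 ∪ (P i).2 ⊆ Z, lam i ≤
        (γ + ε) * ∑ i ∈ L with (P i).1 ⊆ Z, lam i :=
      calc _ = confRatio P L lam Z * ∑ i ∈ L with (P i).1 ⊆ Z, lam i :=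
            (div_mul_cancel_of_imp fun h => le_antisymm (h ▸ hnum) hnum0).symm
        _ ≤ _ := mul_le_mul_of_nonneg_right (hr Z hZ) (hnum0.trans hnum)
    rw [wtComb_eq, wt_of_not_subset hZ]
    nlinarith

lemma entailsFrom_of_conditions (hγ : γ ≤ 1) (hL : L.Nonempty)
    (hX : L.biUnion (fun i => (P i).1) ⊆ X₀) (hY : Y₀ ⊆ X₀ ∪ L.inf fun i => (P i).2)
    (hγs : gammaStar P L X₀ ≤ γ) : entailsFrom γ P L X₀ Y₀ :=
  entailsFrom_of_forall_pos fun ε hε => by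
    obtain ⟨lam, h0, h1, hr⟩ :=
      exists_forall_confRatio_lt_of_gammaStar_lt hL (hγs.trans_lt (lt_add_of_pos_right γ hε))
    exact ⟨lam, h0, wtComb_le_of_confRatio_le h0 h1 hγ hε.le
      (fun i hi => (subset_biUnion_of_mem _ hi).trans hX) hY fun Z hZ => (hr Z hZ).le⟩

end CriticalThreshold

section Certificates

variable {n k : ℕ} {γ : ℝ} {P : Fin k → Finset (Fin n) × Finset (Fin n)} {L : Finset (Fin k)}
  {X₀ Y₀ : Finset (Fin n)} {μ : Fin k → ℝ}

def IsCertificate (γ : ℝ) (P : Fin k → Finset (Fin n) × Finset (Fin n)) (L : Finset (Fin k))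
    (X₀ Y₀ : Finset (Fin n)) (μ : Fin k → ℝ) : Prop :=
  (∀ i ∈ L, 0 < μ i) ∧ ∀ Z, wtComb γ P L μ Z ≤ wt γ Z X₀ Y₀

lemma exists_isCertificate_of_entailsFrom (hγ1 : γ < 1) (h : entailsFrom γ P univ X₀ Y₀) :
    ∃ L μ, IsCertificate γ P L X₀ Y₀ μ := by
  obtain ⟨μ, hμ, hle⟩ := exists_nonneg_wtComb_le_of_entailsFrom hγ1 h
  refine ⟨univ.filter fun i => 0 < μ i, μ, fun i hi => (mem_filter.mp hi).2, fun Z => ?_⟩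
  rw [wtComb, sum_filter_of_ne (p := fun i => 0 < μ i) fun i _ hi =>
    (hμ i).lt_of_ne' (left_ne_zero_of_mul hi)]
  exact hle Z

namespace IsCertificate

lemma sum_le_one (h : IsCertificate γ P L X₀ Y₀ μ) (hγ1 : γ < 1) : ∑ i ∈ L, μ i ≤ 1 := by
  have := h.2 univ
  rw [wtComb, sum_congr rfl fun i _ => by rw [wt_of_union_subset (subset_univ _)], ← sum_mul,
    wt_of_union_subset (subset_univ _)] at this
  nlinarith

lemma wt_eq_neg_of_violated (h : IsCertificate γ P L X₀ Y₀ μ) (hγ0 : 0 < γ) (hγ1 : γ < 1)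
    {Z : Finset (Fin n)} (hZ : X₀ ⊆ Z) (hZY : ¬ X₀ ∪ Y₀ ⊆ Z) :
    ∀ i ∈ L, wt γ Z (P i).1 (P i).2 = -γ := by
  have hterm : ∀ i ∈ L, 0 ≤ μ i * (wt γ Z (P i).1 (P i).2 + γ) := fun i hi =>
    mul_nonneg (h.1 i hi).le (by linarith [neg_le_wt (X := (P i).1) (Y := (P i).2) (Z := Z) hγ0.le])
  have hsum : ∑ i ∈ L, μ i * (wt γ Z (P i).1 (P i).2 + γ) = 0 := by
    refine le_antisymm ?_ (sum_nonneg hterm)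
    have := h.2 Z
    rw [wt_of_subset_of_not_union_subset hZ hZY, wtComb] at this
    simp only [mul_add, sum_add_distrib, ← sum_mul]
    nlinarith [h.sum_le_one hγ1]
  intro i hi
  have := (sum_eq_zero_iff_of_nonneg hterm).mp hsum i hi
  linarith [(mul_eq_zero.mp this).resolve_left (h.1 i hi).ne']

lemma fst_subset (h : IsCertificate γ P L X₀ Y₀ μ) (hγ0 : 0 < γ) (hγ1 : γ < 1)
    (hY : ¬ Y₀ ⊆ X₀) {i : Fin k} (hi : i ∈ L) : (P i).1 ⊆ X₀ :=
  ((wt_eq_neg_iff hγ0.ne').mp (h.wt_eq_neg_of_violated hγ0 hγ1 subset_rfl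
    (fun h' => hY (subset_union_right.trans h')) i hi)).1

lemma sum_eq_one (h : IsCertificate γ P L X₀ Y₀ μ) (hγ0 : 0 < γ) (hγ1 : γ < 1)
    (hY : ¬ Y₀ ⊆ X₀) : ∑ i ∈ L, μ i = 1 := by
  have hX₀ : ¬ X₀ ∪ Y₀ ⊆ X₀ := fun h' => hY (subset_union_right.trans h')
  have := h.2 X₀
  rw [wtComb, sum_congr rfl fun i hi => by rw [h.wt_eq_neg_of_violated hγ0 hγ1 subset_rfl hX₀ i hi],
    ← sum_mul, wt_of_subset_of_not_union_subset subset_rfl hX₀] at this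
  nlinarith [h.sum_le_one hγ1]

lemma union_subset_of_wtComb_pos (h : IsCertificate γ P L X₀ Y₀ μ) (hγ0 : 0 ≤ γ) (hγ1 : γ < 1)
    {Z : Finset (Fin n)} (hZ : 0 < wtComb γ P L μ Z) : X₀ ∪ Y₀ ⊆ Z :=
  (wt_pos_iff hγ0 hγ1).mp (hZ.trans_le (h.2 Z))

lemma subset_biUnion (h : IsCertificate γ P L X₀ Y₀ μ) (hγ0 : 0 < γ) (hγ1 : γ < 1)
    (hY : ¬ Y₀ ⊆ X₀) : X₀ ⊆ L.biUnion fun i => (P i).1 ∪ (P i).2 := by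
  refine subset_union_left.trans (h.union_subset_of_wtComb_pos hγ0.le hγ1 ?_)
  rw [wtComb, sum_congr rfl fun i hi => by
      rw [wt_of_union_subset (subset_biUnion_of_mem (fun i => (P i).1 ∪ (P i).2) hi)],
    ← sum_mul, h.sum_eq_one hγ0 hγ1 hY]
  linarith

lemma subset_union_inf (h : IsCertificate γ P L X₀ Y₀ μ) (hγ0 : 0 < γ) (hγ1 : γ < 1)
    (hY : ¬ Y₀ ⊆ X₀) : Y₀ ⊆ X₀ ∪ L.inf fun i => (P i).2 := by
  -- At `Z = X₀ ∪ Yᵢ` the premise `i` is witnessed, so the conclusion cannot be violated there.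
  have hi : ∀ i ∈ L, Y₀ ⊆ X₀ ∪ (P i).2 := fun i hi => by
    by_contra hc
    have := h.wt_eq_neg_of_violated hγ0 hγ1 subset_union_left
      (fun h' => hc (subset_union_right.trans h')) i hi
    rw [wt_of_union_subset (union_subset_union (h.fst_subset hγ0 hγ1 hY hi) subset_rfl)] at this
    linarith
  rw [← sup_eq_union, inf_sup_distrib_left]
  exact Finset.le_inf hi

lemma restrict (h : IsCertificate γ P L X₀ Y₀ μ) {Z : Finset (Fin n)}
    (hcov : ∀ i ∈ L, ¬ (P i).1 ⊆ Z ∨ (P i).1 ∪ (P i).2 ⊆ Z) (hZ : X₀ ∪ Y₀ ⊆ Z) :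
    IsCertificate γ P {i ∈ L | (P i).1 ∪ (P i).2 ⊆ Z} X₀ Y₀ μ := by
  refine ⟨fun i hi => h.1 i (mem_filter.mp hi).1, fun Z' => ?_⟩
  -- Intersecting with `Z` keeps the premises witnessed by `Z` and kills all the others.
  have hinter : wtComb γ P {i ∈ L | (P i).1 ∪ (P i).2 ⊆ Z} μ Z' = wtComb γ P L μ (Z' ∩ Z) := by
    rw [wtComb, wtComb, sum_filter]
    refine sum_congr rfl fun i hi => ?_
    split_ifs with hiZ
    · rw [wt_inter_of_union_subset hiZ]
    · rw [wt_inter_of_not_subset ((hcov i hi).resolve_right hiZ), mul_zero]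
  rw [hinter, ← wt_inter_of_union_subset hZ]
  exact h.2 _

lemma homogFrom (h : IsCertificate γ P L X₀ Y₀ μ) (hγ0 : 0 < γ) (hγ1 : γ < 1)
    (hmin : ∀ L' ⊂ L, ∀ μ', ¬ IsCertificate γ P L' X₀ Y₀ μ') : homogFrom P L := by
  intro Z hcov
  by_contra! ⟨⟨i₁, hi₁, hX⟩, ⟨i₂, hi₂, hXY⟩⟩
  have hpos : 0 < wtComb γ P L μ Z := by
    rw [wtComb, ← sum_filter_add_sum_filter_not L fun i => (P i).1 ∪ (P i).2 ⊆ Z,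
      sum_eq_zero (s := {i ∈ L | ¬ (P i).1 ∪ (P i).2 ⊆ Z}) fun i hi => by
        rw [mem_filter] at hi
        rw [wt_of_not_subset ((hcov i hi.1).resolve_right hi.2), mul_zero], add_zero]
    refine sum_pos (fun i hi => ?_)
      ⟨i₁, mem_filter.mpr ⟨hi₁, (hcov i₁ hi₁).resolve_left (not_not_intro hX)⟩⟩
    rw [mem_filter] at hi
    rw [wt_of_union_subset hi.2]
    exact mul_pos (h.1 i hi.1) (by linarith)
  exact hmin _ (filter_ssubset.mpr ⟨i₂, hi₂, hXY⟩) μ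
    (h.restrict hcov (h.union_subset_of_wtComb_pos hγ0.le hγ1 hpos))

lemma gammaStar_le (h : IsCertificate γ P L X₀ Y₀ μ) (hγ0 : 0 < γ) (hγ1 : γ < 1)
    (hY : ¬ Y₀ ⊆ X₀) : gammaStar P L X₀ ≤ γ := by
  refine gammaStar_le_of_forall_confRatio_le hγ0.le (fun i hi => (h.1 i hi).le)
    (h.sum_eq_one hγ0 hγ1 hY) fun Z hZ => div_le_of_le_mul₀
      (sum_nonneg fun i hi => (h.1 i (mem_filter.mp hi).1).le) hγ0.le ?_
  have := h.2 Z
  rw [wtComb_eq, wt_of_not_subset hZ] at this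
  linarith

end IsCertificate

lemma conditions_of_entailsFrom (hγ0 : 0 < γ) (hγ1 : γ < 1) (hY : ¬ Y₀ ⊆ X₀)
    (h : entailsFrom γ P univ X₀ Y₀) :
    ∃ L : Finset (Fin k), L.Nonempty ∧ homogFrom P L ∧
      (L.biUnion (fun i => (P i).1) ⊆ X₀ ∧ X₀ ⊆ L.biUnion (fun i => (P i).1 ∪ (P i).2)) ∧
      Y₀ ⊆ X₀ ∪ L.inf (fun i => (P i).2) ∧ gammaStar P L X₀ ≤ γ := by
  obtain ⟨L, hL⟩ := exists_minimal_of_wellFoundedLT (fun L => ∃ μ, IsCertificate γ P L X₀ Y₀ μ)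
    (exists_isCertificate_of_entailsFrom hγ1 h)
  obtain ⟨μ, hμ⟩ := hL.prop
  refine ⟨L, nonempty_of_sum_ne_zero (hμ.sum_eq_one hγ0 hγ1 hY ▸ one_ne_zero),
    hμ.homogFrom hγ0 hγ1 fun L' hL' μ' h' => hL.not_lt ⟨μ', h'⟩ hL',
    ⟨biUnion_subset.mpr fun i hi => hμ.fst_subset hγ0 hγ1 hY hi, hμ.subset_biUnion hγ0 hγ1 hY⟩,
    hμ.subset_union_inf hγ0 hγ1 hY, hμ.gammaStar_le hγ0 hγ1 hY⟩

end Certificates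

theorem stmt17_general {n k : ℕ} (γ : ℝ) (hγ0 : 0 < γ) (hγ1 : γ < 1)
    (P : Fin k → Finset (Fin n) × Finset (Fin n)) (X₀ Y₀ : Finset (Fin n)) :
    (entailsFrom γ P Finset.univ X₀ Y₀ ↔
      ∃ L : Finset (Fin k), properFrom γ P L X₀ Y₀) ∧
    (entailsFrom γ P Finset.univ X₀ Y₀ ↔
      (Y₀ ⊆ X₀ ∨ ∃ L : Finset (Fin k), L.Nonempty ∧
        homogFrom P L ∧
        (L.biUnion (fun i => (P i).1) ⊆ X₀ ∧
         X₀ ⊆ L.biUnion (fun i => (P i).1 ∪ (P i).2)) ∧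
        Y₀ ⊆ X₀ ∪ L.inf (fun i => (P i).2) ∧
        gammaStar P L X₀ ≤ γ)) := by
  refine ⟨⟨exists_properFrom_of_entailsFrom, fun ⟨L, hL⟩ => entailsFrom_mono (subset_univ L) hL.1⟩,
    fun h => (em (Y₀ ⊆ X₀)).imp id fun hY => conditions_of_entailsFrom hγ0 hγ1 hY h, ?_⟩
  rintro (hY | ⟨L, hL, -, ⟨hX, -⟩, hY, hγs⟩)
  · exact entailsFrom_of_subset hγ1.le hY
  · exact entailsFrom_mono (subset_univ L) (entailsFrom_of_conditions hγ1.le hL hX hY hγs)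

theorem stmt17 {n k : ℕ} (γ : ℝ) (hγ0 : 0 < γ) (hγ1 : γ < 1) (hk : 1 ≤ k)
    (P : Fin k → Finset (Fin n) × Finset (Fin n)) (X₀ Y₀ : Finset (Fin n)) :
    (entailsFrom γ P Finset.univ X₀ Y₀ ↔
      ∃ L : Finset (Fin k), properFrom γ P L X₀ Y₀) ∧
    (entailsFrom γ P Finset.univ X₀ Y₀ ↔
      (Y₀ ⊆ X₀ ∨ ∃ L : Finset (Fin k), L.Nonempty ∧
        homogFrom P L ∧
        (L.biUnion (fun i => (P i).1) ⊆ X₀ ∧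
         X₀ ⊆ L.biUnion (fun i => (P i).1 ∪ (P i).2)) ∧
        Y₀ ⊆ X₀ ∪ L.inf (fun i => (P i).2) ∧
        gammaStar P L X₀ ≤ γ)) :=
  stmt17_general γ hγ0 hγ1 P X₀ Y₀
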